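/- arXiv:2408.15699 — 2 statements merged into one kernel-verified Lean document; each statement's English description precedes it below -/
import Mathlib

section
/- Let G be a graph and suppose the complement graph Ḡ has chromatic number c, i.e., the vertices of G can be covered by c cliques of G. Then any matrix X feasible for the Lovász theta SDP of G satisfies Tr(J X) ≤ c; hence ϑ(G) ≤ χ(Ḡ). -/
open Matrix

/-- The all-ones matrix. -/
def allOnes (m : ℕ) : Matrix (Fin m) (Fin m) ℝ := fun _ _ => 1

/-- If the complement graph `Ḡ` is `c`-colorable (i.e. the vertices of `G` can be
covered by `c` cliques), then any feasible `X` for the Lovász theta SDP of `G`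
satisfies `Tr(J X) ≤ c`; hence `ϑ(G) ≤ χ(Ḡ)`. -/
theorem stmt7 {m : ℕ} (G : SimpleGraph (Fin m)) (c : ℕ) (hcol : Gᶜ.Colorable c)
    (X : Matrix (Fin m) (Fin m) ℝ) (hXpsd : X.PosSemidef) (hXtr : X.trace = 1)
    (hXedge : ∀ j l, G.Adj j l → X j l = 0) :
    (allOnes m * X).trace ≤ c := by
  rcases Nat.eq_zero_or_pos m with hm | hm
  · subst hm
    simp [Matrix.trace]
  obtain ⟨f⟩ := hcol
  have hc : 0 < c := Nat.lt_of_le_of_lt (Nat.zero_le _) (f ⟨0, hm⟩).isLt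
  set v : Fin c → Fin m → ℝ := fun k j => (if f j = k then (c : ℝ) else 0) - 1 with hv
  set S : ℝ := ∑ j, ∑ l, X j l with hS
  have htrace : (allOnes m * X).trace = S := by
    simp only [Matrix.trace, Matrix.diag, Matrix.mul_apply, allOnes, one_mul, hS]
    exact Finset.sum_comm
  rw [htrace]
  -- quadratic form nonneg
  have hq : ∀ k, 0 ≤ ∑ j, ∑ l, v k j * (X j l * v k l) := by
    intro k
    have := hXpsd.dotProduct_mulVec_nonneg (v k)
    simpa [dotProduct, Matrix.mulVec, Finset.mul_sum] using this
  have h0 : 0 ≤ ∑ k, ∑ j, ∑ l, v k j * (X j l * v k l) :=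
    Finset.sum_nonneg fun k _ => hq k
  -- swap sums and compute inner sum over k
  have hswap : ∑ k, ∑ j, ∑ l, v k j * (X j l * v k l)
      = ∑ j, ∑ l, X j l * ((if f j = f l then (c : ℝ)^2 else 0) - c) := by
    rw [Finset.sum_comm]
    refine Finset.sum_congr rfl fun j _ => ?_
    rw [Finset.sum_comm]
    refine Finset.sum_congr rfl fun l _ => ?_
    have : ∑ k, v k j * (X j l * v k l) = X j l * ∑ k, v k j * v k l := by
      rw [Finset.mul_sum]; refine Finset.sum_congr rfl fun k _ => by ring
    rw [this]
    congr 1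
    have expand : ∀ k : Fin c, v k j * v k l
        = (if f j = k then (c:ℝ) else 0) * (if f l = k then (c:ℝ) else 0)
          - (if f j = k then (c:ℝ) else 0) - (if f l = k then (c:ℝ) else 0) + 1 := by
      intro k; simp only [hv]; ring
    rw [Finset.sum_congr rfl fun k _ => expand k]
    have h1 : ∑ k : Fin c, (if f j = k then (c:ℝ) else 0) = c := by
      simp
    have h2 : ∑ k : Fin c, (if f l = k then (c:ℝ) else 0) = c := by
      simp
    have h3 : ∑ k : Fin c, (if f j = k then (c:ℝ) else 0) * (if f l = k then (c:ℝ) else 0)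
        = if f j = f l then (c:ℝ)^2 else 0 := by
      by_cases h : f j = f l
      · rw [if_pos h, ← h]
        have hsq : ∀ k ∈ Finset.univ, (if f j = k then (c:ℝ) else 0) * (if f j = k then (c:ℝ) else 0)
            = if f j = k then (c:ℝ)^2 else 0 := fun k _ => by by_cases hk : f j = k <;> simp [hk, sq]
        rw [Finset.sum_congr rfl hsq]
        simp
      · rw [if_neg h]
        apply Finset.sum_eq_zero
        intro k _
        by_cases hk : f j = k
        · have : f l ≠ k := fun hlk => h (hk.trans hlk.symm)
          simp [hk, this]
        · simp [hk]
    simp only [Finset.sum_add_distrib, Finset.sum_sub_distrib, h1, h2, h3, Finset.sum_const,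
      Finset.card_univ, Fintype.card_fin, nsmul_eq_mul, mul_one]
    ring
  -- same-color off-diagonal entries vanish
  have hdiag : ∑ j, ∑ l, X j l * (if f j = f l then (c : ℝ)^2 else 0) = (c:ℝ)^2 := by
    have : ∀ j, ∑ l, X j l * (if f j = f l then (c : ℝ)^2 else 0) = X j j * (c:ℝ)^2 := by
      intro j
      rw [Finset.sum_eq_single j]
      · simp
      · intro l _ hlj
        by_cases h : f j = f l
        · have hadj : G.Adj j l := by
            have hnot : ¬ Gᶜ.Adj j l := fun ha => f.valid ha h
            rw [SimpleGraph.compl_adj] at hnot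
            push_neg at hnot
            exact hnot (Ne.symm hlj)
          simp [hXedge j l hadj]
        · simp [h]
      · intro h; exact absurd (Finset.mem_univ j) h
    rw [Finset.sum_congr rfl fun j _ => this j]
    have : ∑ j, X j j * (c:ℝ)^2 = X.trace * (c:ℝ)^2 := by
      simp [Matrix.trace, Finset.sum_mul]
    rw [this, hXtr, one_mul]
  have hfinal : 0 ≤ (c:ℝ)^2 - c * S := by
    rw [hswap] at h0
    have : ∑ j, ∑ l, X j l * ((if f j = f l then (c : ℝ)^2 else 0) - c)
        = (∑ j, ∑ l, X j l * (if f j = f l then (c : ℝ)^2 else 0)) - c * S := by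
      simp only [mul_sub, Finset.sum_sub_distrib, hS, Finset.mul_sum]
      congr 1
      refine Finset.sum_congr rfl fun j _ => Finset.sum_congr rfl fun l _ => by ring
    rw [this, hdiag] at h0
    exact h0
  have hcR : (0:ℝ) < c := by exact_mod_cast hc
  nlinarith [hfinal, hcR]
end

section
/- For any polynomial f of degree p and any integer n ≥ 1, |f(1/n) − f(0)| ≤ (C·p⁴/n)·sup_{n'≥1} |f(1/n')| for some absolute constant C (e.g., C can be taken explicitly once the Markov brothers' inequality constant is fixed). -/
open Polynomial Finset Real

namespace Stmt14aux


lemma U_eval_one : ∀ n : ℕ, (Chebyshev.U ℝ n).eval 1 = n + 1 := by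
  have key : ∀ n : ℕ, (Chebyshev.U ℝ n).eval 1 = n + 1 ∧ (Chebyshev.U ℝ ((n:ℤ)+1)).eval 1 = n + 2 := by
    intro n
    induction n with
    | zero => constructor <;> simp [Chebyshev.U_zero, Chebyshev.U_one]
    | succ m ih =>
      constructor
      · rw [show ((m+1:ℕ):ℤ) = (m:ℤ)+1 by push_cast; ring]
        rw [ih.2]; push_cast; ring
      · rw [show (((m+1:ℕ)):ℤ)+1 = (m:ℤ)+2 by push_cast; ring, Chebyshev.U_add_two]
        simp only [eval_sub, eval_mul, eval_ofNat, eval_X, ih.1, ih.2]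
        push_cast; ring
  exact fun n => (key n).1

lemma T_deriv_one (p : ℕ) (hp : 1 ≤ p) :
    (derivative (Chebyshev.T ℝ p)).eval 1 = (p:ℝ)^2 := by
  rw [Chebyshev.T_derivative_eq_U]
  rw [show ((p:ℤ) - 1) = ((p - 1 : ℕ) : ℤ) by omega]
  simp only [eval_mul, eval_intCast, U_eval_one (p-1)]
  rw [show ((p-1 : ℕ) : ℝ) = (p:ℝ) - 1 by push_cast [Nat.cast_sub hp]; ring]
  push_cast
  ring

lemma natDegree_T_le : ∀ n : ℕ, (Chebyshev.T ℝ n).natDegree ≤ n := by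
  have key : ∀ n : ℕ, (Chebyshev.T ℝ n).natDegree ≤ n ∧ (Chebyshev.T ℝ ((n:ℤ)+1)).natDegree ≤ n+1 := by
    intro n
    induction n with
    | zero => constructor <;> simp [Chebyshev.T_zero, Chebyshev.T_one]
    | succ m ih =>
      constructor
      · rw [show ((m+1:ℕ):ℤ) = (m:ℤ)+1 by push_cast; ring]; exact ih.2
      · rw [show (((m+1:ℕ)):ℤ)+1 = (m:ℤ)+2 by push_cast; ring, Chebyshev.T_add_two]
        refine le_trans (natDegree_sub_le _ _) ?_
        simp only [max_le_iff]
        refine ⟨le_trans natDegree_mul_le ?_, le_trans ih.1 (by omega)⟩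
        have h1 : (2 * X : ℝ[X]).natDegree ≤ 1 := le_trans natDegree_mul_le (by simp)
        have := ih.2
        omega
  exact fun n => (key n).1

variable {p : ℕ}

/-- Chebyshev extrema nodes. -/
noncomputable def tt (p : ℕ) : Fin (p+1) → ℝ := fun j => Real.cos (j * π / p)

lemma tt_mem (hp : 1 ≤ p) (j : Fin (p+1)) : tt p j ∈ Set.Icc (-1:ℝ) 1 :=
  ⟨Real.neg_one_le_cos _, Real.cos_le_one _⟩

lemma tt_arg_mem (hp : 1 ≤ p) (j : Fin (p+1)) : ((j:ℝ) * π / p) ∈ Set.Icc 0 π := by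
  have hπ : (0:ℝ) < π := Real.pi_pos
  have hp' : (0:ℝ) < p := by exact_mod_cast hp
  constructor
  · positivity
  · rw [div_le_iff₀ hp']
    have : (j:ℝ) ≤ p := by exact_mod_cast Nat.lt_succ_iff.mp j.isLt
    nlinarith

lemma tt_anti (hp : 1 ≤ p) {i j : Fin (p+1)} (hij : i < j) : tt p j < tt p i := by
  have hπ : (0:ℝ) < π := Real.pi_pos
  have hp' : (0:ℝ) < p := by exact_mod_cast hp
  apply Real.strictAntiOn_cos (tt_arg_mem hp i) (tt_arg_mem hp j)
  have hij' : (i:ℝ) < j := by exact_mod_cast hij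
  rw [div_lt_div_iff_of_pos_right hp']
  nlinarith

lemma tt_inj (hp : 1 ≤ p) : Set.InjOn (tt p) ↑(univ : Finset (Fin (p+1))) := by
  intro i _ j _ h
  by_contra hne
  rcases lt_or_gt_of_ne (Ne.intro hne) with hlt | hlt
  · exact (ne_of_gt (tt_anti hp hlt)) h
  · exact (ne_of_gt (tt_anti hp hlt)) h.symm

/-- derivative of the Lagrange basis at 1 -/
noncomputable def dd (p : ℕ) (j : Fin (p+1)) : ℝ :=
  (derivative (Lagrange.basis univ (tt p) j)).eval 1

lemma expand (hp : 1 ≤ p) (g : ℝ[X]) (hg : g.natDegree ≤ p) :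
    (derivative g).eval 1 = ∑ j, g.eval (tt p j) * dd p j := by
  have hdlt : g.degree < (#(univ : Finset (Fin (p+1))) : WithBot ℕ) := by
    rw [card_univ, Fintype.card_fin]
    exact lt_of_le_of_lt Polynomial.degree_le_natDegree (by exact_mod_cast Nat.lt_succ_of_le hg)
  conv_lhs => rw [Lagrange.eq_interpolate (tt_inj hp) hdlt]
  rw [Lagrange.interpolate_apply, derivative_sum, eval_finset_sum]
  apply Finset.sum_congr rfl
  intro j _
  rw [derivative_mul, derivative_C, zero_mul, zero_add, eval_mul, eval_C]
  rfl

lemma deriv_nodal_nonneg (s : Finset (Fin (p+1))) (v : Fin (p+1) → ℝ) (hv : ∀ k, v k ≤ 1) :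
    0 ≤ (derivative (∏ k ∈ s, (X - C (v k)))).eval 1 := by
  classical
  induction s using Finset.induction_on with
  | empty => simp
  | insert a s' hnotmem ih =>
    rw [Finset.prod_insert hnotmem, derivative_mul, eval_add, eval_mul, eval_mul]
    have h1 : (0:ℝ) ≤ (∏ k ∈ s', (X - C (v k))).eval 1 := by
      rw [eval_prod]
      apply Finset.prod_nonneg
      intro k _
      simp only [eval_sub, eval_X, eval_C]
      linarith [hv k]
    have h2 : (derivative (X - C (v a))).eval 1 = 1 := by simp
    simp only [eval_sub, eval_X, eval_C] at *
    nlinarith [hv a, ih]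

lemma basis_eq (hp : 1 ≤ p) (j : Fin (p+1)) :
    Lagrange.basis univ (tt p) j =
      C (∏ k ∈ univ.erase j, (tt p j - tt p k)⁻¹) * ∏ k ∈ univ.erase j, (X - C (tt p k)) := by
  unfold Lagrange.basis Lagrange.basisDivisor
  rw [Finset.prod_mul_distrib, map_prod]

lemma prod_sign (hp : 1 ≤ p) (j : Fin (p+1)) :
    ∃ R : ℝ, 0 < R ∧ ∏ k ∈ univ.erase j, (tt p j - tt p k) = (-1)^(j:ℕ) * R := by
  have hsplit : univ.erase j = Finset.Iio j ∪ Finset.Ioi j := by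
    ext k
    simp only [Finset.mem_erase, Finset.mem_univ, and_true, Finset.mem_union, Finset.mem_Iio,
      Finset.mem_Ioi]
    exact ne_iff_lt_or_gt
  have hdisj : Disjoint (Finset.Iio j) (Finset.Ioi j) := by
    rw [Finset.disjoint_left]
    intro k hk hk'
    simp only [Finset.mem_Iio] at hk
    simp only [Finset.mem_Ioi] at hk'
    exact absurd hk (not_lt_of_gt hk')
  rw [hsplit, Finset.prod_union hdisj]
  have h1 : ∏ k ∈ Finset.Iio j, (tt p j - tt p k) =
      (-1)^(j:ℕ) * ∏ k ∈ Finset.Iio j, (tt p k - tt p j) := by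
    rw [show (∏ k ∈ Finset.Iio j, (tt p j - tt p k)) =
        ∏ k ∈ Finset.Iio j, ((-1) * (tt p k - tt p j)) from
      Finset.prod_congr rfl (fun k _ => by ring)]
    rw [Finset.prod_mul_distrib, Finset.prod_const, Fin.card_Iio]
  refine ⟨(∏ k ∈ Finset.Iio j, (tt p k - tt p j)) * ∏ k ∈ Finset.Ioi j, (tt p j - tt p k),
    ?_, by rw [h1]; ring⟩
  apply mul_pos
  · apply Finset.prod_pos
    intro k hk
    simp only [Finset.mem_Iio] at hk
    linarith [tt_anti hp hk]
  · apply Finset.prod_pos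
    intro k hk
    simp only [Finset.mem_Ioi] at hk
    linarith [tt_anti hp hk]


lemma dd_abs (hp : 1 ≤ p) (j : Fin (p+1)) : |dd p j| = (-1)^(j:ℕ) * dd p j := by
  obtain ⟨R, hR, hprod⟩ := prod_sign hp j
  have hN : 0 ≤ (derivative (∏ k ∈ univ.erase j, (X - C (tt p k)))).eval 1 :=
    deriv_nodal_nonneg _ _ (fun k => (tt_mem hp k).2)
  set N := (derivative (∏ k ∈ univ.erase j, (X - C (tt p k)))).eval 1 with hNdef
  have hdd : dd p j = (∏ k ∈ univ.erase j, (tt p j - tt p k))⁻¹ * N := by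
    unfold dd
    rw [basis_eq hp j, derivative_mul, derivative_C, zero_mul, zero_add, eval_mul, eval_C,
      ← Finset.prod_inv_distrib]
  rw [hdd, hprod]
  rcases Nat.even_or_odd (j:ℕ) with he | ho
  · rw [he.neg_one_pow]
    rw [abs_of_nonneg]
    · ring
    · have : ((1:ℝ) * R)⁻¹ * N = R⁻¹ * N := by ring_nf
      rw [this]; exact mul_nonneg (inv_nonneg.mpr hR.le) hN
  · rw [ho.neg_one_pow]
    have : ((-1:ℝ) * R)⁻¹ * N = -(R⁻¹ * N) := by
      rw [show ((-1:ℝ) * R) = -R by ring, inv_neg]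
      ring
    rw [this, abs_neg, abs_of_nonneg (mul_nonneg (inv_nonneg.mpr hR.le) hN)]
    ring

lemma T_eval_node (hp : 1 ≤ p) (j : Fin (p+1)) :
    (Chebyshev.T ℝ p).eval (tt p j) = (-1)^(j:ℕ) := by
  unfold tt
  rw [Chebyshev.T_real_cos]
  have hp' : (p:ℝ) ≠ 0 := by positivity
  rw [show ((p:ℤ):ℝ) * ((j:ℝ) * π / p) = (j:ℝ) * π - 0 by push_cast; field_simp; ring]
  rw [Real.cos_nat_mul_pi_sub, Real.cos_zero, mul_one]

lemma dd_sum (hp : 1 ≤ p) : ∑ j : Fin (p+1), (-1)^(j:ℕ) * dd p j = (p:ℝ)^2 := by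
  have := expand hp (Chebyshev.T ℝ p) (natDegree_T_le p)
  rw [T_deriv_one p hp] at this
  rw [this]
  exact Finset.sum_congr rfl (fun j _ => by rw [T_eval_node hp j])

/-- Endpoint Markov inequality: `|f'(1)| ≤ p² * M` if `|f| ≤ M` on `[-1,1]`. -/
lemma endpoint_markov (p : ℕ) (f : ℝ[X]) (hdeg : f.natDegree ≤ p) (M : ℝ)
    (hM : ∀ x ∈ Set.Icc (-1:ℝ) 1, |f.eval x| ≤ M) :
    |(derivative f).eval 1| ≤ (p:ℝ)^2 * M := by
  rcases Nat.eq_zero_or_pos p with rfl | hp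
  · have : f = C (f.coeff 0) := Polynomial.eq_C_of_natDegree_le_zero hdeg
    rw [this]
    simp
  · rw [expand hp f hdeg]
    calc |∑ j, f.eval (tt p j) * dd p j| ≤ ∑ j, |f.eval (tt p j) * dd p j| :=
        Finset.abs_sum_le_sum_abs _ _
    _ ≤ ∑ j, M * |dd p j| := by
        apply Finset.sum_le_sum
        intro j _
        rw [abs_mul]
        exact mul_le_mul_of_nonneg_right (hM _ (tt_mem hp j)) (abs_nonneg _)
    _ = M * ∑ j : Fin (p+1), (-1)^(j:ℕ) * dd p j := by
        rw [Finset.mul_sum]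
        exact Finset.sum_congr rfl (fun j _ => by rw [dd_abs hp j])
    _ = M * (p:ℝ)^2 := by rw [dd_sum hp]
    _ = (p:ℝ)^2 * M := by ring


lemma scaled_markov (p : ℕ) (f : ℝ[X]) (hdeg : f.natDegree ≤ p) (c d S : ℝ) (hc : c ≠ 0)
    (hS : ∀ y ∈ Set.Icc (-1:ℝ) 1, |f.eval (c*y + d)| ≤ S) :
    |(derivative f).eval (c + d)| ≤ (p:ℝ)^2 * S / |c| := by
  set g : ℝ[X] := f.comp (C c * X + C d) with hg
  have hgdeg : g.natDegree ≤ p := by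
    refine le_trans Polynomial.natDegree_comp_le ?_
    calc f.natDegree * (C c * X + C d).natDegree ≤ f.natDegree * 1 :=
      Nat.mul_le_mul_left _ natDegree_linear_le
    _ ≤ p := by omega
  have hgeval : ∀ y : ℝ, g.eval y = f.eval (c * y + d) := by
    intro y; rw [hg, eval_comp]; simp
  have hlin : derivative (C c * X + C d : ℝ[X]) = C c := by simp
  have hgd : (derivative g).eval 1 = c * (derivative f).eval (c + d) := by
    rw [hg, derivative_comp, hlin, eval_mul, eval_C, eval_comp]
    simp
  have := endpoint_markov p g hgdeg S (by intro x hx; rw [hgeval]; exact hS x hx)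
  rw [hgd, abs_mul] at this
  rw [le_div_iff₀ (abs_pos.mpr hc)]
  linarith [this]

lemma interval_markov (p : ℕ) (f : ℝ[X]) (hdeg : f.natDegree ≤ p) (a S : ℝ) (ha : 0 < a)
    (hS : ∀ z ∈ Set.Icc 0 a, |f.eval z| ≤ S) :
    ∀ x ∈ Set.Icc 0 a, |(derivative f).eval x| ≤ 4 * (p:ℝ)^2 / a * S := by
  intro x hx
  obtain ⟨hx0, hxa⟩ := hx
  have hS0 : 0 ≤ S := le_trans (abs_nonneg _) (hS 0 ⟨le_refl _, le_of_lt ha⟩)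
  rcases le_or_gt x (a/2) with hhalf | hhalf
  · -- use interval [x, a]; c = (x-a)/2, d = (x+a)/2
    have hc : (x - a)/2 ≠ 0 := by
      intro h; nlinarith
    have key := scaled_markov p f hdeg ((x-a)/2) ((x+a)/2) S hc ?_
    · rw [show (x-a)/2 + (x+a)/2 = x by ring] at key
      refine le_trans key ?_
      have habs : |(x-a)/2| = (a-x)/2 := by
        rw [abs_of_neg (by nlinarith : (x-a)/2 < 0)]; ring
      rw [habs]
      calc (p:ℝ)^2 * S / ((a-x)/2) ≤ (p:ℝ)^2 * S / (a/4) := by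
            apply div_le_div_of_nonneg_left (by positivity) (by positivity)
            nlinarith
        _ = 4 * (p:ℝ)^2 / a * S := by field_simp
    · intro y ⟨hy1, hy2⟩
      apply hS
      constructor <;> nlinarith
  · -- use interval [0, x]; c = x/2, d = x/2
    have hc : x/2 ≠ 0 := (by nlinarith : (0:ℝ) < x/2).ne'
    have key := scaled_markov p f hdeg (x/2) (x/2) S hc ?_
    · rw [show x/2 + x/2 = x by ring] at key
      refine le_trans key ?_
      have habs : |x/2| = x/2 := abs_of_pos (by nlinarith)
      rw [habs]
      calc (p:ℝ)^2 * S / (x/2) ≤ (p:ℝ)^2 * S / (a/4) := by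
            apply div_le_div_of_nonneg_left (by positivity) (by positivity)
            nlinarith
        _ = 4 * (p:ℝ)^2 / a * S := by field_simp
    · intro y ⟨hy1, hy2⟩
      apply hS
      constructor <;> nlinarith

lemma poly_lip (f : ℝ[X]) (u v K : ℝ) (huv : u ≤ v)
    (hK : ∀ x ∈ Set.Icc u v, |(derivative f).eval x| ≤ K) :
    |f.eval v - f.eval u| ≤ K * (v - u) := by
  rcases eq_or_lt_of_le huv with rfl | hlt
  · simp
  · obtain ⟨c, hc, hslope⟩ := exists_hasDerivAt_eq_slope (fun x => f.eval x)
      (fun x => (derivative f).eval x) hlt (f.continuous.continuousOn)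
      (fun x _ => f.hasDerivAt x)
    have hK' := hK c ⟨le_of_lt hc.1, le_of_lt hc.2⟩
    rw [eq_comm, div_eq_iff (by linarith : v - u ≠ 0)] at hslope
    rw [hslope, abs_mul, abs_of_pos (by linarith : (0:ℝ) < v - u)]
    exact mul_le_mul_of_nonneg_right hK' (by linarith)

lemma net_point (a : ℝ) (ha : 0 < a) (ha1 : a ≤ 1/2) (x : ℝ) (hx : x ∈ Set.Icc 0 a) :
    ∃ k : ℕ, 1 ≤ k ∧ (1/(k:ℝ)) ∈ Set.Icc 0 a ∧ |x - 1/(k:ℝ)| ≤ a^2 := by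
  obtain ⟨hx0, hxa⟩ := hx
  rcases le_or_gt x (a^2) with hsmall | hbig
  · refine ⟨⌈(1:ℝ)/a^2⌉₊, ?_, ⟨?_, ?_⟩, ?_⟩
    · rw [Nat.one_le_ceil_iff]; positivity
    · positivity
    · -- 1/⌈1/a²⌉ ≤ a² ≤ a
      have h1 : (1:ℝ)/a^2 ≤ (⌈(1:ℝ)/a^2⌉₊ : ℝ) := Nat.le_ceil _
      have h2 : (0:ℝ) < (⌈(1:ℝ)/a^2⌉₊ : ℝ) := lt_of_lt_of_le (by positivity) h1
      have h3 : (1:ℝ)/(⌈(1:ℝ)/a^2⌉₊ : ℝ) ≤ a^2 := by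
        rw [div_le_iff₀ h2]
        rw [div_le_iff₀ (by positivity : (0:ℝ) < a^2)] at h1
        linarith
      nlinarith
    · have h1 : (1:ℝ)/a^2 ≤ (⌈(1:ℝ)/a^2⌉₊ : ℝ) := Nat.le_ceil _
      have h2 : (0:ℝ) < (⌈(1:ℝ)/a^2⌉₊ : ℝ) := lt_of_lt_of_le (by positivity) h1
      have h3 : (1:ℝ)/(⌈(1:ℝ)/a^2⌉₊ : ℝ) ≤ a^2 := by
        rw [div_le_iff₀ h2]
        rw [div_le_iff₀ (by positivity : (0:ℝ) < a^2)] at h1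
        linarith
      have h4 : (0:ℝ) < 1/(⌈(1:ℝ)/a^2⌉₊ : ℝ) := by positivity
      rw [abs_le]
      constructor <;> nlinarith
  · have hx0' : (0:ℝ) < x := lt_of_le_of_lt (by positivity) hbig
    refine ⟨⌈(1:ℝ)/x⌉₊, ?_, ⟨?_, ?_⟩, ?_⟩
    · rw [Nat.one_le_ceil_iff]; positivity
    · positivity
    · have h1 : (1:ℝ)/x ≤ (⌈(1:ℝ)/x⌉₊ : ℝ) := Nat.le_ceil _
      have h2 : (0:ℝ) < (⌈(1:ℝ)/x⌉₊ : ℝ) := lt_of_lt_of_le (by positivity) h1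
      have h3 : (1:ℝ)/(⌈(1:ℝ)/x⌉₊ : ℝ) ≤ x := by
        rw [div_le_iff₀ h2]
        rw [div_le_iff₀ hx0'] at h1
        linarith
      linarith
    · have h1 : (1:ℝ)/x ≤ (⌈(1:ℝ)/x⌉₊ : ℝ) := Nat.le_ceil _
      have h2 : (0:ℝ) < (⌈(1:ℝ)/x⌉₊ : ℝ) := lt_of_lt_of_le (by positivity) h1
      have h3 : (1:ℝ)/(⌈(1:ℝ)/x⌉₊ : ℝ) ≤ x := by
        rw [div_le_iff₀ h2]
        rw [div_le_iff₀ hx0'] at h1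
        linarith
      have h5 : ((⌈(1:ℝ)/x⌉₊ : ℝ)) < 1/x + 1 := Nat.ceil_lt_add_one (by positivity)
      have h6 : x - 1/(⌈(1:ℝ)/x⌉₊ : ℝ) ≤ x^2 := by
        have h7 : (1:ℝ)/(1/x + 1) ≤ 1/(⌈(1:ℝ)/x⌉₊ : ℝ) := one_div_le_one_div_of_le h2 h5.le
        have h8 : (1:ℝ)/(1/x + 1) = x/(1+x) := by
          field_simp
        rw [h8] at h7
        have h9 : x - x/(1+x) ≤ x^2 := by
          have hpos : (0:ℝ) < 1 + x := by nlinarith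
          have : x - x/(1+x) = x^2/(1+x) := by field_simp; ring
          rw [this, div_le_iff₀ hpos]
          nlinarith
        linarith
      have h10 : (0:ℝ) < 1/(⌈(1:ℝ)/x⌉₊ : ℝ) := by positivity
      rw [abs_le]
      constructor
      · nlinarith
      · nlinarith

end Stmt14aux

open Stmt14aux in
/-- Markov-type consequence: there is an absolute constant `C > 0` such that for every
real polynomial `f` of degree at most `p` and every integer `n ≥ 1`,
`|f(1/n) − f(0)| ≤ (C·p⁴/n) · sup_{n' ≥ 1} |f(1/n')|`. -/
theorem stmt14 :
    ∃ C : ℝ, 0 < C ∧ ∀ (f : Polynomial ℝ) (p : ℕ), f.natDegree ≤ p →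
      ∀ n : ℕ, 1 ≤ n →
        |f.eval (1 / (n : ℝ)) - f.eval 0| ≤
          C * p ^ 4 / n * ⨆ n' : {k : ℕ // 1 ≤ k}, |f.eval (1 / ((n' : ℕ) : ℝ))| := by
  refine ⟨64, by norm_num, ?_⟩
  intro f p hdeg n hn
  set M := ⨆ n' : {k : ℕ // 1 ≤ k}, |f.eval (1 / ((n' : ℕ) : ℝ))| with hMdef
  have hn0 : (0:ℝ) < n := by exact_mod_cast hn
  rcases Nat.eq_zero_or_pos p with rfl | hp
  · have hf : f = C (f.coeff 0) := eq_C_of_natDegree_le_zero hdeg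
    rw [hf]
    simp
  obtain ⟨x₁, hx₁, hB⟩ := IsCompact.exists_isMaxOn (isCompact_Icc : IsCompact (Set.Icc (0:ℝ) 1))
    ⟨0, le_refl 0, by norm_num⟩
    ((continuous_abs.comp f.continuous).continuousOn :
      ContinuousOn (fun x => |f.eval x|) (Set.Icc 0 1))
  have hmem1 : ∀ k : ℕ, 1 ≤ k → (1/(k:ℝ)) ∈ Set.Icc (0:ℝ) 1 := by
    intro k hk
    have hk' : (1:ℝ) ≤ k := by exact_mod_cast hk
    constructor
    · positivity
    · rw [div_le_one (by linarith)]; linarith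
  have hBdd : BddAbove (Set.range fun n' : {k : ℕ // 1 ≤ k} => |f.eval (1 / ((n' : ℕ) : ℝ))|) := by
    refine ⟨|f.eval x₁|, ?_⟩
    rintro _ ⟨k, rfl⟩
    exact hB (hmem1 k k.2)
  have hMle : ∀ k : ℕ, 1 ≤ k → |f.eval (1/(k:ℝ))| ≤ M := fun k hk => le_ciSup hBdd ⟨k, hk⟩
  have hM0 : 0 ≤ M := le_trans (abs_nonneg _) (hMle 1 le_rfl)
  set a : ℝ := 1/(8*(p:ℝ)^2) with hadef
  have hp' : (1:ℝ) ≤ p := by exact_mod_cast hp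
  have ha : 0 < a := by positivity
  have ha1 : a ≤ 1/2 := by
    rw [hadef, div_le_div_iff₀ (by positivity) (by norm_num)]
    nlinarith
  obtain ⟨x₀, hx₀, hmax⟩ := IsCompact.exists_isMaxOn (isCompact_Icc : IsCompact (Set.Icc (0:ℝ) a))
    ⟨0, le_refl 0, ha.le⟩
    ((continuous_abs.comp f.continuous).continuousOn :
      ContinuousOn (fun x => |f.eval x|) (Set.Icc 0 a))
  set S := |f.eval x₀| with hSdef
  have hSle : ∀ z ∈ Set.Icc (0:ℝ) a, |f.eval z| ≤ S := fun z hz => hmax hz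
  have hS0 : 0 ≤ S := abs_nonneg _
  have hKval : 4*(p:ℝ)^2/a = 32*(p:ℝ)^4 := by
    rw [hadef]
    field_simp
    ring
  have hK : ∀ x ∈ Set.Icc (0:ℝ) a, |(derivative f).eval x| ≤ 32*(p:ℝ)^4 * S := by
    intro x hx
    have := interval_markov p f hdeg a S ha hSle x hx
    rwa [hKval] at this
  have hlip2 : ∀ u v : ℝ, u ∈ Set.Icc (0:ℝ) a → v ∈ Set.Icc (0:ℝ) a → u ≤ v →
      |f.eval v - f.eval u| ≤ 32*(p:ℝ)^4 * S * (v - u) := by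
    intro u v hu hv huv
    apply poly_lip f u v _ huv
    intro x hx
    exact hK x ⟨le_trans hu.1 hx.1, le_trans hx.2 hv.2⟩
  have ha2 : 32*(p:ℝ)^4 * a^2 = 1/2 := by
    rw [hadef]
    field_simp
    ring
  -- S ≤ 2 M
  have hS2M : S ≤ 2 * M := by
    obtain ⟨k, hk1, hkmem, hkdist⟩ := net_point a ha ha1 x₀ hx₀
    have hkmem' : (1/(k:ℝ)) ∈ Set.Icc (0:ℝ) a := hkmem
    have hMk : |f.eval (1/(k:ℝ))| ≤ M := hMle k hk1
    have habs := abs_le.mp hkdist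
    rcases le_total x₀ (1/(k:ℝ)) with hord | hord
    · have := hlip2 x₀ (1/(k:ℝ)) hx₀ hkmem' hord
      have hd : (1/(k:ℝ) - x₀) ≤ a^2 := by linarith [habs.1]
      have h1 : |f.eval (1/(k:ℝ)) - f.eval x₀| ≤ 32*(p:ℝ)^4 * S * a^2 := by
        refine le_trans this ?_
        apply mul_le_mul_of_nonneg_left hd (by positivity)
      have h2 : S ≤ M + 32*(p:ℝ)^4 * S * a^2 := by
        have := abs_sub_abs_le_abs_sub (f.eval x₀) (f.eval (1/(k:ℝ)))
        rw [abs_sub_comm] at h1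
        calc S = |f.eval x₀| := hSdef
        _ ≤ |f.eval (1/(k:ℝ))| + |f.eval x₀ - f.eval (1/(k:ℝ))| := by
              have := abs_sub (f.eval x₀) (f.eval (1/(k:ℝ)))
              calc |f.eval x₀| = |f.eval (1/(k:ℝ)) + (f.eval x₀ - f.eval (1/(k:ℝ)))| := by ring_nf
              _ ≤ _ := abs_add_le _ _
        _ ≤ M + 32*(p:ℝ)^4 * S * a^2 := by
              apply add_le_add hMk h1
      have h3 : 32*(p:ℝ)^4 * S * a^2 ≤ 1/2 * S := by
        have : 32*(p:ℝ)^4 * S * a^2 = (32*(p:ℝ)^4 * a^2) * S := by ring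
        rw [this, ha2]
      linarith
    · have := hlip2 (1/(k:ℝ)) x₀ hkmem' hx₀ hord
      have hd : (x₀ - 1/(k:ℝ)) ≤ a^2 := by linarith [habs.2]
      have h1 : |f.eval x₀ - f.eval (1/(k:ℝ))| ≤ 32*(p:ℝ)^4 * S * a^2 := by
        refine le_trans this ?_
        apply mul_le_mul_of_nonneg_left hd (by positivity)
      have h2 : S ≤ M + 32*(p:ℝ)^4 * S * a^2 := by
        calc S = |f.eval x₀| := hSdef
        _ = |f.eval (1/(k:ℝ)) + (f.eval x₀ - f.eval (1/(k:ℝ)))| := by ring_nf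
        _ ≤ |f.eval (1/(k:ℝ))| + |f.eval x₀ - f.eval (1/(k:ℝ))| := abs_add_le _ _
        _ ≤ M + 32*(p:ℝ)^4 * S * a^2 := add_le_add hMk h1
      have h3 : 32*(p:ℝ)^4 * S * a^2 ≤ 1/2 * S := by
        have : 32*(p:ℝ)^4 * S * a^2 = (32*(p:ℝ)^4 * a^2) * S := by ring
        rw [this, ha2]
      linarith
  have hf0 : |f.eval 0| ≤ 2 * M := le_trans (hSle 0 ⟨le_refl 0, ha.le⟩) hS2M
  have hfn : |f.eval (1/(n:ℝ))| ≤ M := hMle n hn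
  rcases le_or_gt ((8:ℝ)*(p:ℝ)^2) (n:ℝ) with hbig | hsmall
  · -- 1/n ≤ a
    have h1n : (1:ℝ)/n ≤ a := by
      rw [hadef]
      exact one_div_le_one_div_of_le (by positivity) hbig
    have hmemn : (1:ℝ)/n ∈ Set.Icc (0:ℝ) a := ⟨by positivity, h1n⟩
    have hmain := hlip2 0 (1/(n:ℝ)) ⟨le_refl 0, ha.le⟩ hmemn (by positivity)
    rw [sub_zero] at hmain
    refine le_trans hmain ?_
    calc 32*(p:ℝ)^4 * S * (1/(n:ℝ)) ≤ 32*(p:ℝ)^4 * (2*M) * (1/(n:ℝ)) := by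
          apply mul_le_mul_of_nonneg_right
            (mul_le_mul_of_nonneg_left hS2M (by positivity)) (by positivity)
    _ = 64 * (p:ℝ)^4 / n * M := by ring
  · -- small n
    have h3M : |f.eval (1/(n:ℝ)) - f.eval 0| ≤ 3 * M := by
      calc |f.eval (1/(n:ℝ)) - f.eval 0| ≤ |f.eval (1/(n:ℝ))| + |f.eval 0| := abs_sub _ _
      _ ≤ 3 * M := by linarith
    refine le_trans h3M ?_
    have hrw : 64 * (p:ℝ)^4 / n * M = (64 * (p:ℝ)^4 * M) / n := by ring
    rw [hrw, le_div_iff₀ hn0]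
    have hA : (n:ℝ) * M ≤ 8*(p:ℝ)^2 * M := mul_le_mul_of_nonneg_right hsmall.le hM0
    have hp2 : 1 ≤ (p:ℝ)^2 := by nlinarith
    have hB2 : (0:ℝ) ≤ ((p:ℝ)^4 - (p:ℝ)^2) * M :=
      mul_nonneg (by nlinarith [sq_nonneg ((p:ℝ)^2 - 1)]) hM0
    nlinarith
end
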